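/- Let i > j ≥ 1 be integers, u = (u_1,…,u_i) ∈ {0,1}^i and v = (v_1,…,v_j) ∈ {0,1}^j. Define, for any binary tuple w of length n, a_0(w) := 0, a_s(w) := max({0} ∪ {r : 1 ≤ r ≤ s, w_r = 1}), and b_s(w) := a_{s−1}(w) if w_s = 1, b_s(w) := s if w_s = 0. Let e_1,…,e_i be the standard basis of ℚ^i and set e_0 := 0. Assume a_i(u) < i − j. Then the i + j − 1 vectors e_{b_q(u)} − e_{a_q(u)} for 1 ≤ q ≤ i with q ≠ a_j(v) + i − j, together with e_{a_s(v)+i−j} − e_{b_s(v)+i−j} for 1 ≤ s ≤ j, are all nonzero and pairwise linearly independent over ℚ (no one is a rational multiple of another). -/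
import Mathlib


/-- `a_s(w) = max({0} ∪ {r : 1 ≤ r ≤ s, w_r = 1})`. -/
def aF (w : ℕ → Bool) (s : ℕ) : ℕ :=
  ((Finset.Icc 1 s).filter (fun r => w r = true)).sup id

/-- `b_s(w) = a_{s-1}(w)` if `w_s = 1`, and `b_s(w) = s` if `w_s = 0`. -/
def bF (w : ℕ → Bool) (s : ℕ) : ℕ :=
  if w s = true then aF w (s - 1) else s

/-- Standard basis vectors of `ℚ^i`, 1-indexed: `stdE i r = e_r` for
`1 ≤ r ≤ i` and `stdE i 0 = e_0 = 0`. -/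
def stdE (i r : ℕ) : Fin i → ℚ :=
  fun m => if (m : ℕ) + 1 = r then 1 else 0

lemma aF_le (w : ℕ → Bool) (s : ℕ) : aF w s ≤ s := by
  apply Finset.sup_le
  intro r hr
  simp only [Finset.mem_filter, Finset.mem_Icc] at hr
  exact hr.1.2

lemma aF_mono (w : ℕ → Bool) {s t : ℕ} (h : s ≤ t) : aF w s ≤ aF w t := by
  apply Finset.sup_mono
  exact Finset.filter_subset_filter _ (Finset.Icc_subset_Icc_right h)

lemma aF_eq_of_true (w : ℕ → Bool) (q : ℕ) (h1 : 1 ≤ q) (h : w q = true) : aF w q = q := by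
  refine le_antisymm (aF_le w q) ?_
  exact Finset.le_sup (f := id) (by simp [Finset.mem_Icc, h1, h])

lemma aF_eq_of_false (w : ℕ → Bool) (q : ℕ) (h : w q = false) : aF w q = aF w (q - 1) := by
  refine le_antisymm ?_ (aF_mono w (Nat.sub_le q 1))
  apply Finset.sup_le
  intro r hr
  simp only [Finset.mem_filter, Finset.mem_Icc] at hr
  have hrq : r ≠ q := by rintro rfl; rw [hr.2] at h; simp at h
  exact Finset.le_sup (f := id) (by simp only [Finset.mem_filter, Finset.mem_Icc]; exact ⟨⟨hr.1.1, by omega⟩, hr.2⟩)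

lemma pair_spec (w : ℕ → Bool) (q : ℕ) (h1 : 1 ≤ q) :
    (bF w q = q ∧ aF w q = aF w (q - 1)) ∨ (bF w q = aF w (q - 1) ∧ aF w q = q) := by
  by_cases h : w q = true
  · right; exact ⟨by simp [bF, h], aF_eq_of_true w q h1 h⟩
  · left
    have hf : w q = false := by simpa using h
    exact ⟨by simp [bF, hf], aF_eq_of_false w q hf⟩

lemma diff_ne (i M m : ℕ) (hm : m < M) (hM : M ≤ i) : stdE i M - stdE i m ≠ 0 := by
  intro h
  have := congrFun h ⟨M - 1, by omega⟩
  simp only [stdE, Pi.sub_apply, Pi.zero_apply] at this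
  rw [show M - 1 + 1 = M from by omega] at this
  rw [if_pos rfl, if_neg (by omega : ¬ M = m)] at this
  norm_num at this

lemma key (i M m M' m' : ℕ) (hmM : m < M) (hMi : M ≤ i) (hmM' : m' < M') (hMi' : M' ≤ i)
    (c : ℚ) (h : stdE i M - stdE i m = c • (stdE i M' - stdE i m')) : M = M' ∧ m = m' := by
  have hp : ∀ k : ℕ, (hk : k < i) →
      ((if k + 1 = M then (1:ℚ) else 0) - (if k + 1 = m then 1 else 0))
        = c * ((if k + 1 = M' then 1 else 0) - (if k + 1 = m' then 1 else 0)) := by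
    intro k hk
    have := congrFun h ⟨k, hk⟩
    simpa [stdE, Pi.sub_apply, Pi.smul_apply, smul_eq_mul] using this
  have e1 := hp (M - 1) (by omega)
  rw [show M - 1 + 1 = M from by omega, if_pos rfl, if_neg (by omega : ¬ M = m)] at e1
  have e2 := hp (M' - 1) (by omega)
  rw [show M' - 1 + 1 = M' from by omega, if_pos rfl, if_neg (by omega : ¬ M' = m')] at e2
  by_cases hMM : M = M'
  · subst hMM
    rw [if_pos rfl, if_neg (by omega : ¬ M = m')] at e1
    have hc : c = 1 := by linarith
    subst hc
    constructor
    · rfl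
    · by_cases h0 : m' = 0
      · by_contra hne
        have hm1 : 1 ≤ m := by omega
        have e3 := hp (m - 1) (by omega)
        rw [show m - 1 + 1 = m from by omega, if_neg (by omega : ¬ m = M), if_pos rfl,
          if_neg (by omega : ¬ m = m')] at e3
        norm_num at e3
      · have e4 := hp (m' - 1) (by omega)
        rw [show m' - 1 + 1 = m' from by omega, if_neg (by omega : ¬ m' = M)] at e4
        rw [if_pos rfl] at e4
        by_cases hmm : m' = m
        · omega
        · rw [if_neg hmm] at e4; norm_num at e4
  · exfalso
    rw [if_neg hMM] at e1
    by_cases hMm' : M = m'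
    · rw [if_pos hMm'] at e1
      rw [if_neg (by omega : ¬ M' = M)] at e2
      by_cases hM'm : M' = m
      · omega
      · rw [if_neg hM'm] at e2; norm_num at e2; linarith
    · rw [if_neg hMm'] at e1; norm_num at e1

lemma ne_gen (i M m A B : ℕ) (hmM : m < M) (hMi : M ≤ i)
    (hAB : (A = M ∧ B = m) ∨ (A = m ∧ B = M)) : stdE i A - stdE i B ≠ 0 := by
  rcases hAB with ⟨hA, hB⟩ | ⟨hA, hB⟩ <;> rw [hA, hB]
  · exact diff_ne i M m hmM hMi
  · intro h0
    apply diff_ne i M m hmM hMi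
    have h2 : stdE i M - stdE i m = -(stdE i m - stdE i M) := (neg_sub _ _).symm
    rw [h2, h0, neg_zero]

lemma key_gen (i M m M' m' A B A' B' : ℕ) (hmM : m < M) (hMi : M ≤ i)
    (hmM' : m' < M') (hMi' : M' ≤ i) (c : ℚ)
    (hAB : (A = M ∧ B = m) ∨ (A = m ∧ B = M))
    (hAB' : (A' = M' ∧ B' = m') ∨ (A' = m' ∧ B' = M'))
    (h : stdE i A - stdE i B = c • (stdE i A' - stdE i B')) : M = M' ∧ m = m' := by
  rcases hAB' with ⟨hA', hB'⟩ | ⟨hA', hB'⟩ <;> rw [hA', hB'] at h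
  · rcases hAB with ⟨hA, hB⟩ | ⟨hA, hB⟩ <;> rw [hA, hB] at h
    · exact key i M m M' m' hmM hMi hmM' hMi' c h
    · refine key i M m M' m' hmM hMi hmM' hMi' (-c) ?_
      rw [neg_smul, ← h, neg_sub]
  · rw [show stdE i m' - stdE i M' = -(stdE i M' - stdE i m') from (neg_sub _ _).symm,
      smul_neg, ← neg_smul] at h
    rcases hAB with ⟨hA, hB⟩ | ⟨hA, hB⟩ <;> rw [hA, hB] at h
    · exact key i M m M' m' hmM hMi hmM' hMi' (-c) h
    · refine key i M m M' m' hmM hMi hmM' hMi' (-(-c)) ?_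
      rw [neg_smul, ← h, neg_sub]

/-- let `i > j ≥ 1`, `u ∈ {0,1}^i`, `v ∈ {0,1}^j` with `a_i(u) < i − j`.
Then the `i + j − 1` vectors `e_{b_q(u)} − e_{a_q(u)}` (`1 ≤ q ≤ i`, `q ≠ a_j(v)+i−j`)
together with `e_{a_s(v)+i−j} − e_{b_s(v)+i−j}` (`1 ≤ s ≤ j`) are all nonzero and
pairwise linearly independent over `ℚ` (no one is a rational multiple of another).
These are the weights of the torus action on `R_{i,j}` at the fixed point `x_{u,v}`. -/
theorem R_weights_pairwise_independent (i j : ℕ) (hj : 1 ≤ j) (hij : j < i)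
    (u v : ℕ → Bool) (ha : aF u i < i - j)
    (F : ℕ ⊕ ℕ → Fin i → ℚ)
    (hF : F = Sum.elim
      (fun q => stdE i (bF u q) - stdE i (aF u q))
      (fun s => stdE i (aF v s + i - j) - stdE i (bF v s + i - j)))
    (Valid : ℕ ⊕ ℕ → Prop)
    (hV : Valid = Sum.elim
      (fun q => 1 ≤ q ∧ q ≤ i ∧ q ≠ aF v j + i - j)
      (fun s => 1 ≤ s ∧ s ≤ j)) :
    (∀ x, Valid x → F x ≠ 0) ∧
    (∀ x y, Valid x → Valid y → x ≠ y → ¬ ∃ c : ℚ, F x = c • F y) := by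
  subst hF hV
  -- orientation data for each kind of vector
  have specA : ∀ q : ℕ, 1 ≤ q → q ≤ i →
      ((bF u q = q ∧ aF u q = aF u (q-1)) ∨ (bF u q = aF u (q-1) ∧ aF u q = q)) :=
    fun q h1 _ => pair_spec u q h1
  have specB : ∀ s : ℕ, 1 ≤ s → s ≤ j →
      ((aF v s + i - j = s + i - j ∧ bF v s + i - j = aF v (s-1) + i - j) ∨
       (aF v s + i - j = aF v (s-1) + i - j ∧ bF v s + i - j = s + i - j)) := by
    intro s h1 _
    rcases pair_spec v s h1 with ⟨hb, haq⟩ | ⟨hb, haq⟩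
    · right; omega
    · left; omega
  have hAle : ∀ q : ℕ, q ≤ i → aF u (q-1) < i - j := fun q hq =>
    lt_of_le_of_lt (aF_mono u (by omega : q - 1 ≤ i)) ha
  have hAlt : ∀ q : ℕ, 1 ≤ q → aF u (q-1) < q := fun q h1 =>
    lt_of_le_of_lt (aF_le u (q-1)) (by omega)
  have hBlt : ∀ s : ℕ, 1 ≤ s → s ≤ j → aF v (s-1) + i - j < s + i - j := fun s h1 hs => by
    have := aF_le v (s-1); omega
  constructor
  · rintro (q | s) hval
    · obtain ⟨h1, h2, _⟩ := hval
      exact ne_gen i q (aF u (q-1)) (bF u q) (aF u q) (hAlt q h1) h2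
        (by rcases specA q h1 h2 with h | h; exacts [Or.inl h, Or.inr h])
    · obtain ⟨h1, h2⟩ := hval
      exact ne_gen i (s + i - j) (aF v (s-1) + i - j) (aF v s + i - j) (bF v s + i - j)
        (hBlt s h1 h2) (by omega)
        (by rcases specB s h1 h2 with h | h; exacts [Or.inl h, Or.inr h])
  · rintro (q | s) (q' | s') hx hy hne ⟨c, hc⟩
    · obtain ⟨h1, h2, _⟩ := hx
      obtain ⟨h1', h2', _⟩ := hy
      have := key_gen i q (aF u (q-1)) q' (aF u (q'-1)) (bF u q) (aF u q) (bF u q') (aF u q')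
        (hAlt q h1) h2 (hAlt q' h1') h2' c
        (by rcases specA q h1 h2 with h | h; exacts [Or.inl h, Or.inr h])
        (by rcases specA q' h1' h2' with h | h; exacts [Or.inl h, Or.inr h])
        (by simpa using hc)
      exact hne (by simp [this.1])
    · obtain ⟨h1, h2, _⟩ := hx
      obtain ⟨h1', h2'⟩ := hy
      have := key_gen i q (aF u (q-1)) (s' + i - j) (aF v (s'-1) + i - j)
        (bF u q) (aF u q) (aF v s' + i - j) (bF v s' + i - j)
        (hAlt q h1) h2 (hBlt s' h1' h2') (by omega) c
        (by rcases specA q h1 h2 with h | h; exacts [Or.inl h, Or.inr h])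
        (by rcases specB s' h1' h2' with h | h; exacts [Or.inl h, Or.inr h])
        (by simpa using hc)
      have h3 := hAle q h2
      omega
    · obtain ⟨h1, h2⟩ := hx
      obtain ⟨h1', h2', _⟩ := hy
      have := key_gen i (s + i - j) (aF v (s-1) + i - j) q' (aF u (q'-1))
        (aF v s + i - j) (bF v s + i - j) (bF u q') (aF u q')
        (hBlt s h1 h2) (by omega) (hAlt q' h1') h2' c
        (by rcases specB s h1 h2 with h | h; exacts [Or.inl h, Or.inr h])
        (by rcases specA q' h1' h2' with h | h; exacts [Or.inl h, Or.inr h])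
        (by simpa using hc)
      have h3 := hAle q' h2'
      omega
    · obtain ⟨h1, h2⟩ := hx
      obtain ⟨h1', h2'⟩ := hy
      have := key_gen i (s + i - j) (aF v (s-1) + i - j) (s' + i - j) (aF v (s'-1) + i - j)
        (aF v s + i - j) (bF v s + i - j) (aF v s' + i - j) (bF v s' + i - j)
        (hBlt s h1 h2) (by omega) (hBlt s' h1' h2') (by omega) c
        (by rcases specB s h1 h2 with h | h; exacts [Or.inl h, Or.inr h])
        (by rcases specB s' h1' h2' with h | h; exacts [Or.inl h, Or.inr h])
        (by simpa using hc)
      have : s = s' := by omega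
      exact hne (by simp [this])
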